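/- Let m, n ∈ ℂ, and set X = (n − m + 2, m + n, 2mn + m − n) ∈ ℂ³ and, for p ∈ ℂ, μ_p = (m²p − mp − n² − n, m²p − 2mp + n² + 2n + p + 1, −mp − n + p − 1) ∈ ℂ³. Then: (i) the dot products of X with L(m, −1) and with L(n, 1) are both zero, so X represents the intersection point MQ ∩ NP for M = τ(m), N = τ(n), P = τ(1), Q = τ(−1); (ii) for every p ∈ ℂ, the dot product of μ_p with X is zero, i.e., every limiting Pascal line in the (2,2,1,1) case passes through MQ ∩ NP; (iii) if moreover m, n ∉ {1, −1} and m ≠ n, then X ≠ 0. -/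
import Mathlib


open Matrix

/-- `L x y` is the coordinate vector of the line through the conic points
`τ x = (1, x, x²)` and `τ y = (1, y, y²)` on the conic `z₀z₂ = z₁²`. -/
def pascalLine (x y : ℂ) : Fin 3 → ℂ := ![x * y, -(x + y), 1]

/-- `μ_p`, the limiting Pascal line of the array `[A B C; F E D]` when
`A = B = M = τ m` and `E = F = N = τ n` along the blow-up direction `p`, with
`C = P = τ 1`, `D = Q = τ(-1)`. -/
def mu (m n p : ℂ) : Fin 3 → ℂ :=
  ![m ^ 2 * p - m * p - n ^ 2 - n,
    m ^ 2 * p - 2 * m * p + n ^ 2 + 2 * n + p + 1,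
    -(m * p) - n + p - 1]

/-- The point `X = (n - m + 2, m + n, 2mn + m - n)` representing `MQ ∩ NP`. -/
def ptX (m n : ℂ) : Fin 3 → ℂ := ![n - m + 2, m + n, 2 * m * n + m - n]

/-- The `(2,2,1,1)` case: (i) `X` lies on the lines `MQ` and `NP`, so it represents
the intersection point `MQ ∩ NP`; (ii) every limiting Pascal line `μ_p` passes
through `X`; (iii) if `M, N, P, Q` are pairwise distinct then `X ≠ 0`. -/
theorem pascal_2211_through_MQ_NP (m n : ℂ) :
    (dotProduct (ptX m n) (pascalLine m (-1)) = 0 ∧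
     dotProduct (ptX m n) (pascalLine n 1) = 0) ∧
    (∀ p : ℂ, dotProduct (mu m n p) (ptX m n) = 0) ∧
    (m ∉ ({1, -1} : Set ℂ) → n ∉ ({1, -1} : Set ℂ) → m ≠ n → ptX m n ≠ 0) := by
  refine ⟨⟨?_, ?_⟩, fun p => ?_, fun hm hn hmn h => ?_⟩
  · simp [ptX, pascalLine, dotProduct, Fin.sum_univ_three]; ring
  · simp [ptX, pascalLine, dotProduct, Fin.sum_univ_three]; ring
  · simp [ptX, mu, dotProduct, Fin.sum_univ_three]; ring
  · have h0 := congrFun h 0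
    have h1 := congrFun h 1
    simp [ptX] at h0 h1
    have : m = 1 := by linear_combination (h1 - h0) / 2
    exact hm (Or.inl this)
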